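/- Fix u, k, ω, σ > 0 and β > 0. Then λ ∫₀^∞ exp(−λα − ½k²σ²(α + β + λ^{−1})) sin(ω(α+β)) sinh((k²σ²/(2λ)) e^{−λ(α+β)}) dα tends to 0 as λ → ∞. -/

import Mathlib

open MeasureTheory Real Set

/-- The paper's leading-order Stokes'-drift kernel `M(β)` for the elastic dumbbell,
with wave amplitude `u`, wavenumber `k`, frequency `ω`, noise strength `σ`,
and spring constant `l` (the paper's `λ`). -/
noncomputable def stokesKernel (u k ω σ l β : ℝ) : ℝ :=
  (1 / 2) * u ^ 2 * k *
    (Real.sin (ω * β) *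
        Real.exp (-(k ^ 2 * σ ^ 2 / 2) * (β + l⁻¹ * (1 - Real.exp (-(l * β))))) -
      l * ∫ α in Ioi (0 : ℝ),
        Real.exp (-(l * α) - k ^ 2 * σ ^ 2 / 2 * (α + β + l⁻¹)) * Real.sin (ω * (α + β)) *
          Real.sinh (k ^ 2 * σ ^ 2 / (2 * l) * Real.exp (-(l * (α + β)))))

/-! The argument of the `sinh` is at most `k²σ²/(2λ)` and the rest of the integrand is
dominated by `e^{-λα}`, whose integral is `1/λ`; so the second term is bounded by
`sinh (k²σ²/(2λ))`, which tends to `0`. -/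

lemma norm_setIntegral_Ioi_le_of_norm_le_mul_exp {E : Type*} [NormedAddCommGroup E]
    [NormedSpace ℝ E] {f : ℝ → E} {M l : ℝ} (hl : 0 < l)
    (hf : ∀ α ∈ Ioi (0 : ℝ), ‖f α‖ ≤ M * exp (-l * α)) :
    ‖∫ α in Ioi (0 : ℝ), f α‖ ≤ M / l := by
  have hint : IntegrableOn (fun α => M * exp (-l * α)) (Ioi 0) :=
    (exp_neg_integrableOn_Ioi 0 hl).const_mul M
  calc ‖∫ α in Ioi (0 : ℝ), f α‖ ≤ ∫ α in Ioi (0 : ℝ), M * exp (-l * α) :=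
        norm_integral_le_of_norm_le hint ((ae_restrict_mem measurableSet_Ioi).mono hf)
    _ = M / l := by
        rw [integral_const_mul, integral_exp_mul_Ioi (neg_neg_iff_pos.2 hl), mul_zero, exp_zero,
          neg_div_neg_eq, mul_one_div]

lemma abs_sinh_le_sinh_of_le {x a : ℝ} (hx : 0 ≤ x) (hxa : x ≤ a) : |sinh x| ≤ sinh a := by
  rw [abs_of_nonneg (sinh_nonneg_iff.2 hx)]
  exact sinh_le_sinh.2 hxa

lemma abs_kernel_integrand_le {c ω l α β : ℝ} (hc : 0 ≤ c) (hl : 0 < l) (hα : 0 ≤ α)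
    (hβ : 0 ≤ β) :
    |exp (-(l * α) - c / 2 * (α + β + l⁻¹)) * sin (ω * (α + β)) *
        sinh (c / (2 * l) * exp (-(l * (α + β))))| ≤ sinh (c / (2 * l)) * exp (-l * α) := by
  have hexp : exp (-(l * α) - c / 2 * (α + β + l⁻¹)) ≤ exp (-l * α) := by
    rw [neg_mul, exp_le_exp]
    have : 0 ≤ c / 2 * (α + β + l⁻¹) := by positivity
    linarith
  have hdecay : exp (-(l * (α + β))) ≤ 1 := exp_le_one_iff.2 (by nlinarith)
  have hsinh : |sinh (c / (2 * l) * exp (-(l * (α + β))))| ≤ sinh (c / (2 * l)) :=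
    abs_sinh_le_sinh_of_le (by positivity) (mul_le_of_le_one_right (by positivity) hdecay)
  rw [abs_mul, abs_mul, abs_exp, mul_comm (sinh _)]
  gcongr
  exact (mul_le_of_le_one_right (exp_pos _).le (abs_sin_le_one _)).trans hexp

lemma abs_mul_kernel_integral_le {c ω l β : ℝ} (hc : 0 ≤ c) (hl : 0 < l) (hβ : 0 ≤ β) :
    |l * ∫ α in Ioi (0 : ℝ), exp (-(l * α) - c / 2 * (α + β + l⁻¹)) * sin (ω * (α + β)) *
        sinh (c / (2 * l) * exp (-(l * (α + β))))| ≤ sinh (c / (2 * l)) := by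
  rw [abs_mul, abs_of_pos hl, ← Real.norm_eq_abs]
  calc l * ‖∫ α in Ioi (0 : ℝ), _‖ ≤ l * (sinh (c / (2 * l)) / l) := by
        gcongr
        exact norm_setIntegral_Ioi_le_of_norm_le_mul_exp hl
          fun α hα => abs_kernel_integrand_le hc hl hα.le hβ
    _ = sinh (c / (2 * l)) := by field_simp

lemma tendsto_sinh_const_div_atTop (c : ℝ) :
    Filter.Tendsto (fun l : ℝ => sinh (c / (2 * l))) Filter.atTop (nhds 0) := by
  have hdiv : Filter.Tendsto (fun l : ℝ => c / (2 * l)) Filter.atTop (nhds 0) :=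
    tendsto_const_nhds.div_atTop (Filter.tendsto_id.const_mul_atTop two_pos)
  simpa [Function.comp_def] using (continuous_sinh.tendsto 0).comp hdiv

theorem kernel_second_term_tendsto_zero_strong_spring (k ω σ β : ℝ)
    (hβ : 0 < β) :
    Filter.Tendsto
      (fun l : ℝ =>
        l * ∫ α in Ioi (0 : ℝ),
          Real.exp (-(l * α) - k ^ 2 * σ ^ 2 / 2 * (α + β + l⁻¹)) * Real.sin (ω * (α + β)) *
            Real.sinh (k ^ 2 * σ ^ 2 / (2 * l) * Real.exp (-(l * (α + β)))))
      Filter.atTop (nhds 0) := by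
  refine squeeze_zero_norm' ?_ (tendsto_sinh_const_div_atTop (k ^ 2 * σ ^ 2))
  filter_upwards [Filter.eventually_gt_atTop 0] with l hl
  exact abs_mul_kernel_integral_le (by positivity) hl hβ.le
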